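/- arXiv:math/0603553 — 4 statements merged into one kernel-verified Lean document; each statement's English description precedes it below -/
import Mathlib

section
/- Block Lemma: Let T be a measure-preserving transformation of a probability space (X, μ) and B a measurable set. Then for any natural numbers R, L, p with R, L ≥ 1, the integral of |(1/R) ∑_{j=0}^{R-1} χ_B ∘ T^{-j} − μ(B)| dμ is at most the integral of |(1/L) ∑_{j=0}^{L-1} χ_B ∘ T^{-jp} − μ(B)| dμ plus pL/R. -/
/-!
Average the `R`-term Birkhoff average `A` of `χ_B` once more, along the progression
`0, p, …, (L - 1) p`. Shifting the window of an `R`-term sum of values in `[0, 1]` by `j p` changes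
it by at most `j p`, so this double average `D` is within `pL/R` of `A` everywhere. Since the map
commutes with its `p`-th power, `D` is also the `R`-term Birkhoff average of the `L`-term averages
`G` along the `p`-th power; hence `|D - μ(B)|` is at most the Birkhoff average of `|G - μ(B)|`,
whose integral is `∫ |G - μ(B)|` by invariance of `μ`.
-/

open MeasureTheory

section Orbit

variable {α : Type*}

theorem birkhoffAverage_birkhoffAverage_comm {f g : α → α} (h : Function.Commute f g)
    (φ : α → ℝ) (m n : ℕ) :
    birkhoffAverage ℝ f (birkhoffAverage ℝ g φ m) n
      = birkhoffAverage ℝ g (birkhoffAverage ℝ f φ n) m := by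
  funext x
  simp only [birkhoffAverage, birkhoffSum, smul_eq_mul, Finset.mul_sum]
  rw [Finset.sum_comm]
  refine Finset.sum_congr rfl fun j _ => Finset.sum_congr rfl fun k _ => ?_
  rw [(h.iterate_iterate k j).eq]
  ring

theorem dist_birkhoffSum_iterate_le {E : Type*} [NormedAddCommGroup E] (f : α → α) {g : α → E}
    {C : ℝ} (hg : ∀ y z, dist (g y) (g z) ≤ C) (n k : ℕ) (x : α) :
    dist (birkhoffSum f g n (f^[k] x)) (birkhoffSum f g n x) ≤ k * C := by
  induction k with
  | zero => simp
  | succ k ih =>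
    calc dist (birkhoffSum f g n (f^[k + 1] x)) (birkhoffSum f g n x)
        ≤ dist (birkhoffSum f g n (f (f^[k] x))) (birkhoffSum f g n (f^[k] x))
          + dist (birkhoffSum f g n (f^[k] x)) (birkhoffSum f g n x) := by
          rw [Function.iterate_succ_apply']
          exact dist_triangle _ _ _
      _ ≤ C + k * C := by
          rw [dist_birkhoffSum_apply_birkhoffSum]
          exact add_le_add (hg _ _) ih
      _ = (k + 1 : ℕ) * C := by push_cast; ring

theorem dist_birkhoffAverage_iterate_le {E : Type*} [NormedAddCommGroup E] (𝕜 : Type*) [RCLike 𝕜]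
    [NormedSpace 𝕜 E] (f : α → α) {g : α → E} {C : ℝ} (hg : ∀ y z, dist (g y) (g z) ≤ C)
    (n k : ℕ) (x : α) :
    dist (birkhoffAverage 𝕜 f g n (f^[k] x)) (birkhoffAverage 𝕜 f g n x) ≤ k * C / n := by
  rw [dist_birkhoffAverage_birkhoffAverage]
  gcongr
  exact dist_birkhoffSum_iterate_le f hg n k x

theorem abs_birkhoffAverage_le (f : α → α) (g : α → ℝ) (n : ℕ) (x : α) :
    |birkhoffAverage ℝ f g n x| ≤ birkhoffAverage ℝ f (fun y => |g y|) n x := by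
  simp only [birkhoffAverage, birkhoffSum, smul_eq_mul, abs_mul, abs_inv, Nat.abs_cast]
  gcongr
  exact Finset.abs_sum_le_sum_abs _ _

theorem birkhoffAverage_le_of_forall_le {f : α → α} {g : α → ℝ} {n : ℕ} (hn : n ≠ 0) {x : α}
    {C : ℝ} (h : ∀ k < n, g (f^[k] x) ≤ C) : birkhoffAverage ℝ f g n x ≤ C := by
  have hsum : birkhoffSum f g n x ≤ n * C := by
    simpa [birkhoffSum] using Finset.sum_le_sum fun k hk => h k (Finset.mem_range.mp hk)
  rw [birkhoffAverage, smul_eq_mul, inv_mul_le_iff₀ (by positivity)]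
  exact hsum

theorem birkhoffAverage_sub_const (f : α → α) (g : α → ℝ) (c : ℝ) {n : ℕ} (hn : n ≠ 0) (x : α) :
    birkhoffAverage ℝ f (fun y => g y - c) n x = birkhoffAverage ℝ f g n x - c := by
  rw [show (fun y => g y - c) = g - fun _ => c from rfl, birkhoffAverage_sub,
    Pi.sub_apply, Pi.sub_apply,
    birkhoffAverage_of_comp_eq ℝ (g := fun _ => c) rfl (Nat.cast_ne_zero.mpr hn)]

theorem abs_birkhoffAverage_sub_le {f : α → α} {g : α → ℝ} {n : ℕ} (hn : n ≠ 0) {x : α}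
    {C : ℝ} (h : ∀ k < n, |g (f^[k] x) - g x| ≤ C) : |birkhoffAverage ℝ f g n x - g x| ≤ C := by
  rw [← birkhoffAverage_sub_const f g _ hn]
  exact (abs_birkhoffAverage_le _ _ _ _).trans (birkhoffAverage_le_of_forall_le hn h)

end Orbit

namespace MeasureTheory.MeasurePreserving

variable {X : Type*} [MeasurableSpace X] {μ : Measure X} {S : X → X}

theorem integrable_birkhoffSum (hS : MeasurePreserving S μ μ) {g : X → ℝ}
    (hg : Integrable g μ) (n : ℕ) : Integrable (birkhoffSum S g n) μ :=
  integrable_finsetSum _ fun k _ => (hS.iterate k).integrable_comp_of_integrable hg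

theorem integrable_birkhoffAverage (hS : MeasurePreserving S μ μ) {g : X → ℝ}
    (hg : Integrable g μ) (n : ℕ) : Integrable (birkhoffAverage ℝ S g n) μ :=
  (hS.integrable_birkhoffSum hg n).smul (n : ℝ)⁻¹

theorem integral_birkhoffAverage (hS : MeasurePreserving S μ μ) {g : X → ℝ}
    (hg : Integrable g μ) {n : ℕ} (hn : n ≠ 0) :
    ∫ x, birkhoffAverage ℝ S g n x ∂μ = ∫ x, g x ∂μ := by
  have hcomp : ∀ k, ∫ x, g (S^[k] x) ∂μ = ∫ x, g x ∂μ := fun k => by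
    have hk := hS.iterate k
    rw [← integral_map hk.measurable.aemeasurable
      (by rw [hk.map_eq]; exact hg.aestronglyMeasurable), hk.map_eq]
  simp only [birkhoffAverage, birkhoffSum, smul_eq_mul]
  rw [integral_const_mul, integral_finsetSum (f := fun k x => g (S^[k] x)) _ fun k _ =>
    (hS.iterate k).integrable_comp_of_integrable hg]
  simp only [hcomp, Finset.sum_const, Finset.card_range, nsmul_eq_mul]
  field_simp

theorem integral_abs_birkhoffAverage_sub_le [IsProbabilityMeasure μ]
    (hS : MeasurePreserving S μ μ) {φ : X → ℝ} (hφ : Integrable φ μ)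
    (hφ01 : ∀ x, φ x ∈ Set.Icc (0 : ℝ) 1) (c : ℝ) {R L : ℕ} (hR : R ≠ 0) (hL : L ≠ 0) (p : ℕ) :
    ∫ x, |birkhoffAverage ℝ S φ R x - c| ∂μ
      ≤ ∫ x, |birkhoffAverage ℝ S^[p] φ L x - c| ∂μ + p * L / R := by
  set A := birkhoffAverage ℝ S φ R
  set G := birkhoffAverage ℝ S^[p] φ L
  set D := birkhoffAverage ℝ S G R
  have hA : Integrable A μ := hS.integrable_birkhoffAverage hφ R
  have hG : Integrable (fun x => |G x - c|) μ :=
    (((hS.iterate p).integrable_birkhoffAverage hφ L).sub (integrable_const c)).abs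
  have hDA : D = birkhoffAverage ℝ S^[p] A L :=
    birkhoffAverage_birkhoffAverage_comm (Function.Commute.self_iterate S p) φ L R
  have close : ∀ x, |A x - D x| ≤ p * L / R := fun x => by
    rw [abs_sub_comm, hDA]
    refine abs_birkhoffAverage_sub_le hL fun j hj => ?_
    rw [← Function.iterate_mul, ← Real.dist_eq]
    refine (dist_birkhoffAverage_iterate_le ℝ S
      (fun y z => Real.dist_le_of_mem_Icc_01 (hφ01 y) (hφ01 z)) R (p * j) x).trans ?_
    have hpj : ((p * j : ℕ) : ℝ) * 1 ≤ p * L := by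
      rw [mul_one]; exact_mod_cast Nat.mul_le_mul_left p hj.le
    exact div_le_div_of_nonneg_right hpj (Nat.cast_nonneg R)
  have spread : ∀ x, |D x - c| ≤ birkhoffAverage ℝ S (fun y => |G y - c|) R x := fun x => by
    rw [← birkhoffAverage_sub_const S G c hR]
    exact abs_birkhoffAverage_le S _ R x
  calc ∫ x, |A x - c| ∂μ
      ≤ ∫ x, (p * L / R + birkhoffAverage ℝ S (fun y => |G y - c|) R x) ∂μ := by
        refine integral_mono (hA.sub (integrable_const c)).abs
          ((integrable_const _).add (hS.integrable_birkhoffAverage hG R)) fun x => ?_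
        calc |A x - c| ≤ |A x - D x| + |D x - c| := abs_sub_le _ _ _
          _ ≤ _ := add_le_add (close x) (spread x)
    _ = ∫ x, |G x - c| ∂μ + p * L / R := by
        rw [integral_add (integrable_const _) (hS.integrable_birkhoffAverage hG R),
          hS.integral_birkhoffAverage hG hR, integral_const, probReal_univ, one_smul, add_comm]

end MeasureTheory.MeasurePreserving

theorem neg_natCast_eq_iterate {X : Type*} {T : ℤ → X → X}
    (hadd : ∀ m n : ℤ, ∀ x : X, T (m + n) x = T m (T n x)) (hzero : ∀ x : X, T 0 x = x)
    (n : ℕ) : T (-n) = (T (-1))^[n] := by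
  induction n with
  | zero => funext x; simp [hzero]
  | succ n ih =>
    funext x
    rw [Function.iterate_succ_apply', ← ih, ← hadd]
    push_cast; ring_nf

/-- **Block Lemma** (Adams). For a measure-preserving invertible transformation
(modeled as a measure-preserving ℤ-action `T`) of a probability space and a
measurable set `B`, the `L¹` ergodic average over `R` terms is controlled by the
average along the arithmetic progression with gap `p` over `L` terms, up to `pL/R`. -/
theorem block_lemma {X : Type*} [MeasurableSpace X] (μ : Measure X) [IsProbabilityMeasure μ]
    (T : ℤ → X → X) (hmp : ∀ n : ℤ, MeasurePreserving (T n) μ μ)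
    (hadd : ∀ m n : ℤ, ∀ x : X, T (m + n) x = T m (T n x)) (hzero : ∀ x : X, T 0 x = x)
    (B : Set X) (hB : MeasurableSet B) (R L p : ℕ) (hR : 1 ≤ R) (hL : 1 ≤ L) :
    ∫ x, |(1 / (R : ℝ)) * ∑ j ∈ Finset.range R, B.indicator (1 : X → ℝ) (T (-(j : ℤ)) x)
        - (μ B).toReal| ∂μ
      ≤ (∫ x, |(1 / (L : ℝ)) * ∑ j ∈ Finset.range L, B.indicator (1 : X → ℝ) (T (-((j : ℤ) * (p : ℤ))) x)
        - (μ B).toReal| ∂μ) + ((p : ℝ) * L) / R := by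
  have hT : ∀ n : ℕ, T (-n) = (T (-1))^[n] := neg_natCast_eq_iterate hadd hzero
  have hTp : ∀ j : ℕ, T (-((j : ℤ) * (p : ℤ))) = ((T (-1))^[p])^[j] := fun j => by
    rw [← Function.iterate_mul, ← hT]; push_cast; ring_nf
  have hint : Integrable (B.indicator (1 : X → ℝ)) μ := (integrable_const 1).indicator hB
  have h01 : ∀ x, B.indicator (1 : X → ℝ) x ∈ Set.Icc (0 : ℝ) 1 := fun x => by
    by_cases hx : x ∈ B <;> simp [hx]
  simp only [hTp, hT, one_div]
  -- both integrands are now Birkhoff averages for `T (-1)` and `(T (-1))^[p]`, up to unfolding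
  exact (hmp (-1)).integral_abs_birkhoffAverage_sub_le hint h01 _ (by omega) (by omega) p
end

section
/- For the simple polynomial staircase transformation T_{D,δ} with spacers s_{n,j} = j^D and cuts r_n = ⌊h_n^{1/(D+δ)}⌋, where h_{n+1} = r_n h_n + ∑_{j=0}^{r_n−1} j^D and h_0 = 1, the series ∑_{n=0}^∞ (1/(r_n h_n)) ∑_{j=0}^{r_n−1} j^D converges, provided D ≥ 1 and δ > 0. (Hence T_{D,δ} is defined on a finite measure space.) -/
/-!
Since `r n ≤ (h n)^{1/(D+δ)}`, the `n`-th term is at most `r n ^ D / h n ≤ (h n)^{-δ/(D+δ)}`,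
and `h (n+1) ≥ r n * h n ≥ 2 h n` gives `h n ≥ 2^n`, so the series is dominated by the
geometric series of ratio `2^{-δ/(D+δ)} < 1`.
-/

open Finset

lemma Nat.two_pow_le_of_two_mul_le_succ {h : ℕ → ℕ} (h0 : 0 < h 0)
    (hstep : ∀ n, 2 * h n ≤ h (n + 1)) (n : ℕ) : 2 ^ n ≤ h n := by
  induction n with
  | zero => exact h0
  | succ k ih => calc 2 ^ (k + 1) = 2 * 2 ^ k := by ring
      _ ≤ 2 * h k := by omega
      _ ≤ h (k + 1) := hstep k

lemma sum_range_pow_le_mul_pow (r D : ℕ) :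
    ∑ j ∈ range r, (j : ℝ) ^ D ≤ r * (r : ℝ) ^ D := by
  simpa using Finset.sum_le_card_nsmul (range r) (fun j => (j : ℝ) ^ D) ((r : ℝ) ^ D)
    fun j hj => pow_le_pow_left₀ j.cast_nonneg (by exact_mod_cast (mem_range.mp hj).le) D

lemma inv_mul_sum_range_pow_le_rpow {D : ℕ} {δ : ℝ} (hDδ : (D : ℝ) + δ ≠ 0) {r : ℕ} {x : ℝ}
    (hx : 0 < x) (hr : (r : ℝ) ≤ x ^ (1 / ((D : ℝ) + δ))) :
    1 / ((r : ℝ) * x) * ∑ j ∈ range r, (j : ℝ) ^ D ≤ x ^ (-(δ / ((D : ℝ) + δ))) := by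
  rcases r.eq_zero_or_pos with rfl | hr0
  · simpa using (Real.rpow_pos_of_pos hx _).le
  have hr0' : (0 : ℝ) < r := Nat.cast_pos.mpr hr0
  have hpow : (r : ℝ) ^ D ≤ x ^ ((D : ℝ) / ((D : ℝ) + δ)) := by
    calc (r : ℝ) ^ D ≤ (x ^ (1 / ((D : ℝ) + δ))) ^ D := pow_le_pow_left₀ hr0'.le hr D
      _ = x ^ ((D : ℝ) / ((D : ℝ) + δ)) := by
        rw [← Real.rpow_natCast, ← Real.rpow_mul hx.le, one_div_mul_eq_div]
  have hexp : -(δ / ((D : ℝ) + δ)) = (D : ℝ) / ((D : ℝ) + δ) - 1 := by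
    field_simp; ring
  calc 1 / ((r : ℝ) * x) * ∑ j ∈ range r, (j : ℝ) ^ D
      ≤ 1 / ((r : ℝ) * x) * (r * (r : ℝ) ^ D) := by
        gcongr; exact sum_range_pow_le_mul_pow r D
    _ = (r : ℝ) ^ D / x := by field_simp
    _ ≤ x ^ ((D : ℝ) / ((D : ℝ) + δ)) / x := by gcongr
    _ = x ^ (-(δ / ((D : ℝ) + δ))) := by rw [hexp, Real.rpow_sub hx, Real.rpow_one]

lemma rpow_neg_le_pow_of_two_pow_le {e x : ℝ} (he : 0 ≤ e) {n : ℕ} (hx : (2 : ℝ) ^ n ≤ x) :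
    x ^ (-e) ≤ ((2 : ℝ) ^ (-e)) ^ n := by
  calc x ^ (-e) ≤ ((2 : ℝ) ^ n) ^ (-e) :=
        Real.rpow_le_rpow_of_nonpos (by positivity) hx (neg_nonpos.mpr he)
    _ = ((2 : ℝ) ^ (-e)) ^ n := by
        rw [← Real.rpow_natCast, ← Real.rpow_natCast, ← Real.rpow_mul zero_le_two,
          ← Real.rpow_mul zero_le_two, mul_comm]

theorem simple_polynomial_staircase_finite_general (D : ℕ) (δ : ℝ) (hδ : 0 < δ)
    (h r : ℕ → ℕ)
    (hrdef : ∀ n, r n = ⌊(h n : ℝ) ^ (1 / ((D : ℝ) + δ))⌋₊)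
    (hrec : ∀ n, h (n + 1) = r n * h n + ∑ j ∈ Finset.range (r n), j ^ D)
    (hr2 : ∀ n, 2 ≤ r n) :
    Summable (fun n => (1 / ((r n : ℝ) * (h n : ℝ))) * ∑ j ∈ Finset.range (r n), (j : ℝ) ^ D) := by
  have hr_le (n : ℕ) : (r n : ℝ) ≤ (h n : ℝ) ^ (1 / ((D : ℝ) + δ)) :=
    hrdef n ▸ Nat.floor_le (by positivity)
  have hh0 : 0 < h 0 := by
    by_contra! h0
    have hr0 : r 0 = 0 := by
      rw [hrdef 0, Nat.le_zero.mp h0, Nat.cast_zero, Real.zero_rpow (by positivity),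
        Nat.floor_zero]
    have := hr2 0
    omega
  have hdouble (n : ℕ) : 2 * h n ≤ h (n + 1) := by
    rw [hrec n]
    exact (Nat.mul_le_mul_right _ (hr2 n)).trans (Nat.le_add_right _ _)
  have hgrow (n : ℕ) : (2 : ℝ) ^ n ≤ h n := by
    exact_mod_cast Nat.two_pow_le_of_two_mul_le_succ hh0 hdouble n
  have hpos (n : ℕ) : (0 : ℝ) < h n := (by positivity : (0 : ℝ) < 2 ^ n).trans_le (hgrow n)
  have hratio : (2 : ℝ) ^ (-(δ / ((D : ℝ) + δ))) < 1 :=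
    Real.rpow_lt_one_of_one_lt_of_neg one_lt_two (neg_lt_zero.mpr (by positivity))
  refine Summable.of_nonneg_of_le (fun n => by positivity) (fun n => ?_)
    (summable_geometric_of_lt_one (by positivity) hratio)
  exact (inv_mul_sum_range_pow_le_rpow (by positivity) (hpos n) (hr_le n)).trans
    (rpow_neg_le_pow_of_two_pow_le (by positivity) (hgrow n))

/-- For the simple polynomial staircase transformation `T_{D,δ}` with spacers
`s_{n,j} = j^D`, cuts `r n = ⌊(h n)^{1/(D+δ)}⌋` and heights
`h (n+1) = r n * h n + ∑_{j<r n} j^D` (with all `r n ≥ 2`), the series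
`∑_n (1/(r_n h_n)) ∑_{j<r_n} j^D` converges; hence `T_{D,δ}` is defined on a
finite measure space. -/
theorem simple_polynomial_staircase_finite (D : ℕ) (hD : 1 ≤ D) (δ : ℝ) (hδ : 0 < δ)
    (h r : ℕ → ℕ)
    (hrdef : ∀ n, r n = ⌊(h n : ℝ) ^ (1 / ((D : ℝ) + δ))⌋₊)
    (hrec : ∀ n, h (n + 1) = r n * h n + ∑ j ∈ Finset.range (r n), j ^ D)
    (hr2 : ∀ n, 2 ≤ r n) :
    Summable (fun n => (1 / ((r n : ℝ) * (h n : ℝ))) * ∑ j ∈ Finset.range (r n), (j : ℝ) ^ D) :=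
  simple_polynomial_staircase_finite_general D δ hδ h r hrdef hrec hr2
end

section
/- Let T be a rank-one transformation on a finite measure space with spacers {s_{n,j}}, cuts {r_n}, and heights {h_n}, and fix k ∈ ℕ. Then for every δ > 0, for all sufficiently large n, the set of j ∈ {0,...,r_n−k−1} with partial sum s_{n,j}^{(k)} := ∑_{z=0}^{k−1} s_{n,j+z} ≥ δ h_n has cardinality less than δ r_n. Equivalently, if there exists δ > 0 such that for infinitely many n at least δ r_n indices j satisfy s_{n,j}^{(k)} ≥ δ h_n, then ∑_n s̄_n/h_n = ∞ (so the space has infinite measure). -/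
open Finset
open scoped Classical

/-!
At a stage `n` where `δ r_n` windows of `k` consecutive spacers each carry at least `δ h_n`,
summing over these windows gives `δ r_n · δ h_n ≤ k ∑_j s_{n,j}`, because each spacer lies in
at most `k` windows. Hence `k s̄_n / h_n ≥ δ²` infinitely often, so the terms of the series do not
tend to zero.
-/

theorem sum_sum_shift_le_nsmul_sum {M : Type*} [AddCommMonoid M] [PartialOrder M]
    [IsOrderedAddMonoid M] {s : ℕ → M} (hs : ∀ j, 0 ≤ s j) {S : Finset ℕ} {m k : ℕ}
    (hS : S ⊆ range (m - k)) :
    ∑ j ∈ S, ∑ z ∈ range k, s (j + z) ≤ k • ∑ j ∈ range m, s j := by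
  rw [sum_comm]
  refine (sum_le_card_nsmul (range k) _ _ fun z hz => ?_).trans_eq (by rw [card_range])
  have hmap : S.map (addRightEmbedding z) ⊆ range m := by
    intro i hi
    obtain ⟨j, hj, rfl⟩ := mem_map.mp hi
    have hj' := mem_range.mp (hS hj)
    have hz' := mem_range.mp hz
    simp only [addRightEmbedding_apply, mem_range]
    omega
  simpa only [sum_map, addRightEmbedding_apply] using sum_le_sum_of_subset_of_nonneg hmap fun i _ _ => hs i

theorem card_filter_mul_le_mul_sum {s : ℕ → ℝ} (hs : ∀ j, 0 ≤ s j) (m k : ℕ) (a : ℝ) :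
    #{j ∈ range (m - k) | a ≤ ∑ z ∈ range k, s (j + z)} * a ≤ k * ∑ j ∈ range m, s j := by
  rw [← nsmul_eq_mul, ← nsmul_eq_mul]
  exact (card_nsmul_le_sum _ _ a fun j hj => (mem_filter.mp hj).2).trans
    (sum_sum_shift_le_nsmul_sum hs (filter_subset _ _))

theorem sq_le_mul_mean_div_of_card_filter {s : ℕ → ℝ} (hs : ∀ j, 0 ≤ s j) {m k : ℕ} {H δ : ℝ}
    (hm : 0 < m) (hH : 0 < H) (hδ : 0 ≤ δ)
    (hcard : δ * m ≤ #{j ∈ range (m - k) | δ * H ≤ ∑ z ∈ range k, s (j + z)}) :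
    δ ^ 2 ≤ k * ((∑ j ∈ range m, s j) / m / H) := by
  have hm' : (0 : ℝ) < m := by exact_mod_cast hm
  rw [div_div, mul_div_assoc', le_div_iff₀ (by positivity)]
  calc δ ^ 2 * (m * H) = δ * m * (δ * H) := by ring
    _ ≤ _ := mul_le_mul_of_nonneg_right hcard (by positivity)
    _ ≤ _ := card_filter_mul_le_mul_sum hs m k (δ * H)

theorem pos_of_mul_le_succ {r h : ℕ → ℕ} (h0 : 0 < h 0) (hr : ∀ n, 0 < r n)
    (hrec : ∀ n, r n * h n ≤ h (n + 1)) (n : ℕ) : 0 < h n := by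
  induction n with
  | zero => exact h0
  | succ n ih => exact (Nat.mul_pos (hr n) ih).trans_le (hrec n)

/-- If for some `δ > 0` there are infinitely many stages `n` at which at least `δ r_n`
indices `j ∈ {0,…,r_n−k−1}` have partial spacer sum `s_{n,j}^{(k)} = ∑_{z<k} s_{n,j+z}`
at least `δ h_n`, then `∑_n s̄_n/h_n = ∞` (the space has infinite measure). -/
theorem large_partial_sums_infinite_measure (r : ℕ → ℕ) (hr : ∀ n, 1 ≤ r n)
    (s : ℕ → ℕ → ℕ) (h : ℕ → ℕ) (h0 : h 0 = 1)
    (hrec : ∀ n, h (n + 1) = r n * h n + ∑ j ∈ Finset.range (r n), s n j)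
    (k : ℕ) (δ : ℝ) (hδ : 0 < δ)
    (hinf : ∀ N : ℕ, ∃ n ≥ N, δ * (r n : ℝ) ≤
        (((Finset.range (r n - k)).filter
          (fun j => δ * (h n : ℝ) ≤ ∑ z ∈ Finset.range k, (s n (j + z) : ℝ))).card : ℝ)) :
    ¬ Summable (fun n => ((∑ j ∈ Finset.range (r n), (s n j : ℝ)) / (r n : ℝ)) / (h n : ℝ)) := by
  intro hsum
  have hh : ∀ n, 0 < h n := pos_of_mul_le_succ (h0 ▸ one_pos) hr
    fun n => (hrec n).symm ▸ Nat.le_add_right _ _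
  have hsmall : ∀ᶠ n in Filter.atTop,
      (k : ℝ) * ((∑ j ∈ range (r n), (s n j : ℝ)) / r n / h n) < δ ^ 2 := by
    have hlim := hsum.tendsto_atTop_zero.const_mul (k : ℝ)
    rw [mul_zero] at hlim
    exact hlim.eventually (gt_mem_nhds (pow_pos hδ 2))
  obtain ⟨N, hN⟩ := Filter.eventually_atTop.mp hsmall
  obtain ⟨n, hnN, hn⟩ := hinf N
  have hlarge := sq_le_mul_mean_div_of_card_filter (fun j => Nat.cast_nonneg (s n j)) (hr n)
    (Nat.cast_pos.mpr (hh n)) hδ.le hn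
  exact (hlarge.trans_lt (hN n hnN)).false
end

section
/- If {q_n} and {n} are sequences with q_n/n → 0 and for every fixed ℓ ∈ {1,...,L−1} the sequence {ℓ k_n q_n} is mixing for T (μ(T^{ℓk_nq_n}(B) ∩ B) → μ(B)²), then limsup_n ∫|(1/n)∑_{j=0}^{n−1} χ_B ∘ T^{−jk_n} − μ(B)| dμ ≤ 2/√L + limsup error terms; letting L → ∞ the ergodic averages along jk_n tend to 0 in L¹. -/
/-!
Put `S = T (-1)`, so that the averages are Birkhoff averages of `S^[k n]`, and compare the average
of `g = χ_B - μ(B)` with the average of its block average `G = (1/L) ∑_{ℓ<L} g ∘ S^[ℓ k n q n]`.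
Moving the starting point of a Birkhoff sum of a function bounded by `1` by `a` steps changes it by
at most `2a`, so the two averages differ pointwise by at most `2 L q n / n → 0`. Since `S` preserves
`μ`, the `L¹` norm of the average of `G` is at most `‖G‖₁ ≤ ‖G‖₂`, and expanding `‖G‖₂²` produces
the correlations `μ(S^[(ℓ - m) k n q n] ⁻¹' B ∩ B) - μ(B)²`, which vanish in the limit off the
diagonal by mixing. Hence `‖G‖₂² → (μ(B) - μ(B)²) / L ≤ 1 / L`, and the `limsup` of the `L¹` norms
is at most `1 / √L` for every `L`.
-/

open MeasureTheory Filter Finset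

section Dynamics

variable {α E : Type*}

theorem dist_birkhoffSum_iterate_apply_birkhoffSum_le [NormedAddCommGroup E] (f : α → α) {g : α → E}
    {C : ℝ} (hg : ∀ x, ‖g x‖ ≤ C) (n a : ℕ) (x : α) :
    dist (birkhoffSum f g n (f^[a] x)) (birkhoffSum f g n x) ≤ 2 * a * C := by
  induction a with
  | zero => simp
  | succ a ih =>
    have hstep : dist (birkhoffSum f g n (f (f^[a] x))) (birkhoffSum f g n (f^[a] x)) ≤ 2 * C := by
      rw [dist_birkhoffSum_apply_birkhoffSum]
      linarith [dist_le_norm_add_norm (g (f^[n] (f^[a] x))) (g (f^[a] x)), hg (f^[n] (f^[a] x)),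
        hg (f^[a] x)]
    calc dist (birkhoffSum f g n (f^[a + 1] x)) (birkhoffSum f g n x)
        ≤ dist (birkhoffSum f g n (f (f^[a] x))) (birkhoffSum f g n (f^[a] x))
          + dist (birkhoffSum f g n (f^[a] x)) (birkhoffSum f g n x) := by
          rw [Function.iterate_succ_apply']; exact dist_triangle _ _ _
      _ ≤ 2 * (a + 1 : ℕ) * C := by push_cast; linarith

theorem birkhoffSum_birkhoffAverage_iterate {R M : Type*} [DivisionSemiring R] [AddCommMonoid M]
    [Module R M] (f : α → α) (g : α → M) (p L n : ℕ) (x : α) :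
    birkhoffSum f (birkhoffAverage R (f^[p]) g L) n x
      = (L : R)⁻¹ • ∑ ℓ ∈ range L, birkhoffSum f g n (f^[p * ℓ] x) := by
  simp only [birkhoffSum, birkhoffAverage, ← Finset.smul_sum]
  rw [Finset.sum_comm]
  congr! 3 with ℓ - j
  rw [← Function.iterate_mul, ← Function.iterate_add_apply, add_comm, Function.iterate_add_apply]

theorem dist_birkhoffAverage_birkhoffAverage_iterate_le [NormedAddCommGroup E] [NormedSpace ℝ E]
    (f : α → α) {g : α → E} {C : ℝ} (hg : ∀ x, ‖g x‖ ≤ C) {L : ℕ} (hL : L ≠ 0) (p n : ℕ) (x : α) :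
    dist (birkhoffAverage ℝ f g n x) (birkhoffAverage ℝ f (birkhoffAverage ℝ (f^[p]) g L) n x)
      ≤ 2 * L * p * C / n := by
  have hC : 0 ≤ C := (norm_nonneg _).trans (hg x)
  have hLR : (L : ℝ) ≠ 0 := Nat.cast_ne_zero.mpr hL
  have hsum : dist (birkhoffSum f g n x) (birkhoffSum f (birkhoffAverage ℝ (f^[p]) g L) n x)
      ≤ 2 * L * p * C := by
    have hconst : birkhoffSum f g n x = (L : ℝ)⁻¹ • ∑ ℓ ∈ range L, birkhoffSum f g n x := by
      rw [Finset.sum_const, card_range, ← Nat.cast_smul_eq_nsmul ℝ, smul_smul,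
        inv_mul_cancel₀ hLR, one_smul]
    rw [birkhoffSum_birkhoffAverage_iterate, hconst, dist_smul₀]
    calc ‖(L : ℝ)⁻¹‖ * dist (∑ ℓ ∈ range L, birkhoffSum f g n x)
          (∑ ℓ ∈ range L, birkhoffSum f g n (f^[p * ℓ] x))
        ≤ ‖(L : ℝ)⁻¹‖ * ∑ ℓ ∈ range L, 2 * L * p * C := by
          gcongr
          refine (dist_sum_sum_le _ _ _).trans (Finset.sum_le_sum fun ℓ hℓ => ?_)
          rw [dist_comm]
          refine (dist_birkhoffSum_iterate_apply_birkhoffSum_le f hg n _ x).trans ?_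
          have hℓL : (ℓ : ℝ) ≤ L := by exact_mod_cast (Finset.mem_range.mp hℓ).le
          have := mul_le_mul_of_nonneg_left hℓL (by positivity : (0 : ℝ) ≤ 2 * p * C)
          push_cast
          linarith
      _ = 2 * L * p * C := by
          rw [Finset.sum_const, card_range, nsmul_eq_mul, norm_inv, Real.norm_natCast]
          field_simp
  simp only [birkhoffAverage]
  rw [dist_smul₀, norm_inv, Real.norm_natCast, div_eq_inv_mul]
  gcongr

theorem birkhoffAverage_eq_smul_sum {M : Type*} [AddCommMonoid M] [Module ℝ M] (f : α → α)
    (g : α → M) (n : ℕ) :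
    birkhoffAverage ℝ f g n = (n : ℝ)⁻¹ • ∑ j ∈ range n, g ∘ f^[j] := by
  ext x
  simp [birkhoffAverage, birkhoffSum, Finset.sum_apply]

end Dynamics

section MeasurePreserving

variable {X : Type*} [MeasurableSpace X] {μ : Measure X}

theorem MeasureTheory.MeasurePreserving.integral_comp_of_aestronglyMeasurable {Y E : Type*}
    [MeasurableSpace Y] [NormedAddCommGroup E] [NormedSpace ℝ E] {ν : Measure Y} {f : X → Y}
    (hf : MeasurePreserving f μ ν) {g : Y → E} (hg : AEStronglyMeasurable g ν) :
    ∫ x, g (f x) ∂μ = ∫ y, g y ∂ν := by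
  rw [← hf.map_eq] at hg ⊢
  exact (integral_map hf.measurable.aemeasurable hg).symm

theorem memLp_birkhoffAverage {f : X → X} (hf : MeasurePreserving f μ μ) {g : X → ℝ}
    {p : ENNReal} (hg : MemLp g p μ) (n : ℕ) : MemLp (birkhoffAverage ℝ f g n) p μ := by
  rw [birkhoffAverage_eq_smul_sum]
  exact (memLp_finsetSum' _ fun j _ => hg.comp_measurePreserving (hf.iterate j)).const_smul _

theorem integrable_birkhoffAverage {f : X → X} (hf : MeasurePreserving f μ μ) {g : X → ℝ}
    (hg : Integrable g μ) (n : ℕ) : Integrable (birkhoffAverage ℝ f g n) μ := by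
  rw [birkhoffAverage_eq_smul_sum]
  exact (integrable_finsetSum' _ fun j _ => (hf.iterate j).integrable_comp_of_integrable hg).smul _

theorem integral_birkhoffAverage {f : X → X} (hf : MeasurePreserving f μ μ) {g : X → ℝ}
    (hg : Integrable g μ) (n : ℕ) :
    ∫ x, birkhoffAverage ℝ f g n x ∂μ = (n : ℝ)⁻¹ * (n * ∫ x, g x ∂μ) := by
  simp only [birkhoffAverage_eq_smul_sum, Pi.smul_apply, Finset.sum_apply, Function.comp_apply,
    smul_eq_mul]
  rw [integral_const_mul, integral_finsetSum (f := fun j x => g (f^[j] x)) _ fun j _ =>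
    (hf.iterate j).integrable_comp_of_integrable hg]
  simp only [fun j => (hf.iterate j).integral_comp_of_aestronglyMeasurable hg.aestronglyMeasurable,
    Finset.sum_const, card_range, nsmul_eq_mul]

theorem integral_abs_birkhoffAverage_le {f : X → X} (hf : MeasurePreserving f μ μ) {g : X → ℝ}
    (hg : Integrable g μ) (n : ℕ) :
    ∫ x, |birkhoffAverage ℝ f g n x| ∂μ ≤ ∫ x, |g x| ∂μ := by
  have habs : ∀ x, |birkhoffAverage ℝ f g n x| ≤ birkhoffAverage ℝ f (fun y => |g y|) n x := by
    intro x
    simp only [birkhoffAverage, birkhoffSum, smul_eq_mul, abs_mul, abs_inv, Nat.abs_cast]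
    gcongr
    exact Finset.abs_sum_le_sum_abs _ _
  calc ∫ x, |birkhoffAverage ℝ f g n x| ∂μ
      ≤ ∫ x, birkhoffAverage ℝ f (fun y => |g y|) n x ∂μ :=
        integral_mono_of_nonneg (.of_forall fun _ => abs_nonneg _)
          (integrable_birkhoffAverage hf hg.abs n)
          (.of_forall habs)
    _ = (n : ℝ)⁻¹ * (n * ∫ x, |g x| ∂μ) := integral_birkhoffAverage hf hg.abs n
    _ ≤ ∫ x, |g x| ∂μ := by
        rcases eq_or_ne n 0 with rfl | hn
        · simpa using integral_nonneg fun x => abs_nonneg (g x)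
        · rw [inv_mul_cancel_left₀ (Nat.cast_ne_zero.mpr hn)]

theorem integral_abs_le_sqrt_integral_sq [IsProbabilityMeasure μ] {g : X → ℝ} (hg : MemLp g 2 μ) :
    ∫ x, |g x| ∂μ ≤ √(∫ x, g x ^ 2 ∂μ) := by
  have hvar := ProbabilityTheory.variance_nonneg |g| μ
  rw [ProbabilityTheory.variance_eq_sub hg.abs] at hvar
  refine (Real.le_sqrt (integral_nonneg fun x => abs_nonneg _)
    (integral_nonneg fun x => sq_nonneg _)).mpr ?_
  simpa [sq_abs] using hvar

theorem integral_comp_iterate_mul_comp_iterate {f : X → X} (hf : MeasurePreserving f μ μ)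
    {g h : X → ℝ} (hg : Measurable g) (hh : Measurable h) {ℓ m : ℕ} (hmℓ : m ≤ ℓ) :
    ∫ x, g (f^[ℓ] x) * h (f^[m] x) ∂μ = ∫ x, g (f^[ℓ - m] x) * h x ∂μ := by
  have hsplit : ∀ x, f^[ℓ] x = f^[ℓ - m] (f^[m] x) := fun x => by
    rw [← Function.iterate_add_apply, Nat.sub_add_cancel hmℓ]
  simp only [hsplit]
  exact (hf.iterate m).integral_comp_of_aestronglyMeasurable
    ((hg.comp (hf.iterate _).measurable).mul hh).aestronglyMeasurable

noncomputable def centeredIndicator (μ : Measure X) (B : Set X) (x : X) : ℝ :=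
  B.indicator 1 x - μ.real B

theorem integral_centeredIndicator_comp_mul [IsProbabilityMeasure μ] {φ : X → X}
    (hφ : MeasurePreserving φ μ μ) {B : Set X} (hB : MeasurableSet B) :
    ∫ x, centeredIndicator μ B (φ x) * centeredIndicator μ B x ∂μ
      = μ.real (φ ⁻¹' B ∩ B) - μ.real B ^ 2 := by
  have hχ : MemLp (B.indicator (1 : X → ℝ)) 2 μ := memLp_indicator_const 2 hB 1 (by simp)
  have hχφ : MemLp (B.indicator (1 : X → ℝ) ∘ φ) 2 μ := hχ.comp_measurePreserving hφ
  have hmean : ∫ x, B.indicator (1 : X → ℝ) x ∂μ = μ.real B := integral_indicator_one hB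
  have hmeanφ : ∫ x, B.indicator (1 : X → ℝ) (φ x) ∂μ = μ.real B := by
    rw [hφ.integral_comp_of_aestronglyMeasurable hχ.aestronglyMeasurable, hmean]
  have hprod : B.indicator (1 : X → ℝ) ∘ φ * B.indicator 1 = (φ ⁻¹' B ∩ B).indicator 1 := by
    rw [Set.inter_indicator_one]; rfl
  have hcov := ProbabilityTheory.covariance_eq_sub hχφ hχ
  rw [hprod, integral_indicator_one ((hφ.measurable hB).inter hB)] at hcov
  simp only [ProbabilityTheory.covariance, Function.comp_apply, hmean, hmeanφ] at hcov
  simp only [centeredIndicator]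
  rw [hcov]
  ring

theorem integral_birkhoffAverage_sq {f : X → X} (hf : MeasurePreserving f μ μ) {g : X → ℝ}
    (hg : MemLp g 2 μ) (L : ℕ) :
    ∫ x, birkhoffAverage ℝ f g L x ^ 2 ∂μ
      = (L : ℝ)⁻¹ ^ 2 * ∑ ℓ ∈ range L, ∑ m ∈ range L, ∫ x, g (f^[ℓ] x) * g (f^[m] x) ∂μ := by
  have hint : ∀ ℓ m, Integrable (fun x => g (f^[ℓ] x) * g (f^[m] x)) μ := fun ℓ m =>
    (hg.comp_measurePreserving (hf.iterate ℓ)).integrable_mul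
      (hg.comp_measurePreserving (hf.iterate m))
  simp only [birkhoffAverage, birkhoffSum, smul_eq_mul, mul_pow, sq (Finset.sum _ _),
    Finset.sum_mul_sum]
  rw [integral_const_mul,
    integral_finsetSum _ fun ℓ _ => integrable_finsetSum _ fun m _ => hint ℓ m]
  simp only [integral_finsetSum _ fun m _ => hint _ m]

theorem tendsto_integral_centeredIndicator_iterate_mul [IsProbabilityMeasure μ]
    {R : ℕ → X → X} (hR : ∀ n, MeasurePreserving (R n) μ μ) {B : Set X} (hB : MeasurableSet B)
    (hmix : ∀ i, 1 ≤ i →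
      Tendsto (fun n => μ.real ((R n)^[i] ⁻¹' B ∩ B)) atTop (nhds (μ.real B ^ 2)))
    (ℓ m : ℕ) :
    Tendsto (fun n => ∫ x, centeredIndicator μ B ((R n)^[ℓ] x)
        * centeredIndicator μ B ((R n)^[m] x) ∂μ) atTop
      (nhds (if ℓ = m then μ.real B - μ.real B ^ 2 else 0)) := by
  wlog hmℓ : m ≤ ℓ generalizing ℓ m
  · simpa only [mul_comm, eq_comm] using this m ℓ (le_of_not_ge hmℓ)
  have hc : Measurable (centeredIndicator μ B) := (measurable_const.indicator hB).sub_const _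
  have hcorr : ∀ n, ∫ x, centeredIndicator μ B ((R n)^[ℓ] x)
      * centeredIndicator μ B ((R n)^[m] x) ∂μ
        = μ.real ((R n)^[ℓ - m] ⁻¹' B ∩ B) - μ.real B ^ 2 := fun n => by
    rw [integral_comp_iterate_mul_comp_iterate (hR n) hc hc hmℓ]
    exact integral_centeredIndicator_comp_mul ((hR n).iterate _) hB
  simp only [hcorr]
  rcases hmℓ.eq_or_lt with rfl | hlt
  · simp only [Nat.sub_self, Function.iterate_zero, Set.preimage_id, Set.inter_self, if_true]
    exact tendsto_const_nhds
  · rw [if_neg hlt.ne', ← sub_self (μ.real B ^ 2)]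
    exact (hmix (ℓ - m) (by omega)).sub_const _

theorem abs_centeredIndicator_le_one [IsProbabilityMeasure μ] (B : Set X) (x : X) :
    |centeredIndicator μ B x| ≤ 1 := by
  have h0 : 0 ≤ μ.real B := measureReal_nonneg
  have h1 : μ.real B ≤ 1 := measureReal_le_one
  by_cases hx : x ∈ B <;> simp [centeredIndicator, hx, abs_le] <;> linarith

theorem tendsto_integral_birkhoffAverage_centeredIndicator_sq [IsProbabilityMeasure μ]
    {R : ℕ → X → X} (hR : ∀ n, MeasurePreserving (R n) μ μ) {B : Set X} (hB : MeasurableSet B)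
    (hmix : ∀ i, 1 ≤ i →
      Tendsto (fun n => μ.real ((R n)^[i] ⁻¹' B ∩ B)) atTop (nhds (μ.real B ^ 2)))
    (L : ℕ) :
    Tendsto (fun n => ∫ x, birkhoffAverage ℝ (R n) (centeredIndicator μ B) L x ^ 2 ∂μ) atTop
      (nhds ((μ.real B - μ.real B ^ 2) / L)) := by
  have hc : MemLp (centeredIndicator μ B) 2 μ :=
    (memLp_indicator_const 2 hB (1 : ℝ) (by simp)).sub (memLp_const (μ.real B))
  simp only [integral_birkhoffAverage_sq (hR _) hc]
  have hsum := (tendsto_finsetSum (range L) fun ℓ _ => tendsto_finsetSum (range L) fun m _ =>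
    tendsto_integral_centeredIndicator_iterate_mul hR hB hmix ℓ m).const_mul ((L : ℝ)⁻¹ ^ 2)
  convert hsum using 2
  rw [Finset.sum_congr rfl fun ℓ hℓ => by rw [Finset.sum_ite_eq, if_pos hℓ], Finset.sum_const,
    card_range, nsmul_eq_mul]
  rcases eq_or_ne L 0 with rfl | hL
  · simp
  · field_simp

theorem integral_abs_birkhoffAverage_le_sqrt_add [IsProbabilityMeasure μ] {f : X → X}
    (hf : MeasurePreserving f μ μ) {g : X → ℝ} (hgm : Measurable g) {C : ℝ}
    (hg : ∀ x, |g x| ≤ C) {L : ℕ} (hL : L ≠ 0) (p n : ℕ) :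
    ∫ x, |birkhoffAverage ℝ f g n x| ∂μ
      ≤ √(∫ x, birkhoffAverage ℝ (f^[p]) g L x ^ 2 ∂μ) + 2 * L * p * C / n := by
  set G := birkhoffAverage ℝ (f^[p]) g L
  have hg2 : MemLp g 2 μ :=
    memLp_of_bounded (a := -C) (b := C) (.of_forall fun x => abs_le.mp (hg x))
      hgm.aestronglyMeasurable 2
  have hG : MemLp G 2 μ := memLp_birkhoffAverage (hf.iterate p) hg2 L
  have hGi : Integrable G μ := hG.integrable one_le_two
  have hblock : ∀ x, |birkhoffAverage ℝ f g n x|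
      ≤ |birkhoffAverage ℝ f G n x| + 2 * L * p * C / n := fun x => by
    have := dist_birkhoffAverage_birkhoffAverage_iterate_le f (g := g) hg hL p n x
    rw [Real.dist_eq] at this
    linarith [abs_sub_abs_le_abs_sub (birkhoffAverage ℝ f g n x) (birkhoffAverage ℝ f G n x)]
  calc ∫ x, |birkhoffAverage ℝ f g n x| ∂μ
      ≤ ∫ x, (|birkhoffAverage ℝ f G n x| + 2 * L * p * C / n) ∂μ :=
        integral_mono_of_nonneg (.of_forall fun _ => abs_nonneg _)
          ((integrable_birkhoffAverage hf hGi n).abs.add (integrable_const _)) (.of_forall hblock)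
    _ = ∫ x, |birkhoffAverage ℝ f G n x| ∂μ + 2 * L * p * C / n := by
        rw [integral_add (integrable_birkhoffAverage hf hGi n).abs (integrable_const _),
          integral_const, probReal_univ, one_smul]
    _ ≤ √(∫ x, G x ^ 2 ∂μ) + 2 * L * p * C / n := by
        gcongr
        exact (integral_abs_birkhoffAverage_le hf hGi n).trans (integral_abs_le_sqrt_integral_sq hG)

theorem birkhoffAverage_indicator_sub_measureReal {f : X → X} (B : Set X) {n : ℕ} (hn : n ≠ 0)
    (x : X) :
    birkhoffAverage ℝ f (B.indicator 1) n x - μ.real B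
      = birkhoffAverage ℝ f (centeredIndicator μ B) n x := by
  have hn' : (n : ℝ) ≠ 0 := Nat.cast_ne_zero.mpr hn
  simp only [birkhoffAverage, birkhoffSum, centeredIndicator, Finset.sum_sub_distrib,
    Finset.sum_const, card_range, nsmul_eq_mul, smul_eq_mul]
  field_simp

theorem tendsto_integral_abs_birkhoffAverage_indicator_sub [IsProbabilityMeasure μ]
    {f : ℕ → X → X} (hf : ∀ n, MeasurePreserving (f n) μ μ) {B : Set X} (hB : MeasurableSet B)
    {Q : ℕ → ℕ} (hQ : Tendsto (fun n => (Q n : ℝ) / n) atTop (nhds 0))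
    (hmix : ∀ i, 1 ≤ i →
      Tendsto (fun n => μ.real (((f n)^[Q n])^[i] ⁻¹' B ∩ B)) atTop (nhds (μ.real B ^ 2))) :
    Tendsto (fun n => ∫ x, |birkhoffAverage ℝ (f n) (B.indicator 1) n x - μ.real B| ∂μ) atTop
      (nhds 0) := by
  refine tendsto_order.2 ⟨fun a ha => .of_forall fun n =>
    ha.trans_le (integral_nonneg fun _ => abs_nonneg _), fun ε hε => ?_⟩
  obtain ⟨L, hL⟩ := exists_nat_gt (1 / ε ^ 2)
  have hLpos : (0 : ℝ) < L := lt_trans (by positivity) hL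
  have hlim : Tendsto (fun n =>
      √(∫ x, birkhoffAverage ℝ ((f n)^[Q n]) (centeredIndicator μ B) L x ^ 2 ∂μ)
        + 2 * L * Q n * 1 / n) atTop (nhds (√((μ.real B - μ.real B ^ 2) / L) + 2 * L * 0)) := by
    refine (tendsto_integral_birkhoffAverage_centeredIndicator_sq (fun n => (hf n).iterate (Q n))
      hB hmix L).sqrt.add ((hQ.const_mul (2 * (L : ℝ))).congr fun n => ?_)
    ring
  have hsmall : √((μ.real B - μ.real B ^ 2) / L) + 2 * L * 0 < ε := by
    have h0 : 0 ≤ μ.real B := measureReal_nonneg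
    have h1 : μ.real B ≤ 1 := measureReal_le_one
    rw [mul_zero, add_zero, Real.sqrt_lt' hε, div_lt_iff₀ hLpos]
    rw [div_lt_iff₀ (by positivity)] at hL
    nlinarith
  filter_upwards [hlim.eventually_lt_const hsmall, eventually_ne_atTop 0] with n hn hn0
  simp only [birkhoffAverage_indicator_sub_measureReal B hn0]
  exact (integral_abs_birkhoffAverage_le_sqrt_add (hf n)
    ((measurable_const.indicator hB).sub_const _) (abs_centeredIndicator_le_one B)
    (Nat.cast_pos.mp hLpos).ne' (Q n) n).trans_lt hn

end MeasurePreserving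

/-- Combining the Block Lemma with the Hölder/van der Corput estimate: if `q n / n → 0`
and for each fixed `ℓ ≥ 1` the sequence `{ℓ k_n q_n}` is mixing for `T`
(`μ(T^{ℓ k_n q_n}(B) ∩ B) → μ(B)²`), then the `L¹` ergodic averages along `j k_n`
tend to `0`. -/
theorem block_lemma_mixing_consequence {X : Type*} [MeasurableSpace X] (μ : Measure X)
    [IsProbabilityMeasure μ]
    (T : ℤ → X → X) (hmp : ∀ n : ℤ, MeasurePreserving (T n) μ μ)
    (hadd : ∀ m n : ℤ, ∀ x : X, T (m + n) x = T m (T n x)) (hzero : ∀ x : X, T 0 x = x)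
    (B : Set X) (hB : MeasurableSet B) (k q : ℕ → ℕ)
    (hq : Tendsto (fun n : ℕ => (q n : ℝ) / (n : ℝ)) atTop (nhds 0))
    (hmix : ∀ ℓ : ℕ, 1 ≤ ℓ →
      Tendsto (fun n : ℕ => (μ (T (-((ℓ * k n * q n : ℕ) : ℤ)) ⁻¹' B ∩ B)).toReal)
        atTop (nhds ((μ B).toReal ^ 2))) :
    Tendsto (fun n : ℕ => ∫ x, |(1 / (n : ℝ)) * ∑ j ∈ Finset.range n,
        B.indicator (1 : X → ℝ) (T (-((j * k n : ℕ) : ℤ)) x) - (μ B).toReal| ∂μ)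
      atTop (nhds 0) := by
  have hiter : ∀ m : ℕ, T (-(m : ℤ)) = (T (-1))^[m] := by
    intro m
    induction m with
    | zero => exact funext hzero
    | succ m ih =>
      funext x
      rw [Function.iterate_succ_apply', ← ih, ← hadd]
      congr 1
      push_cast
      ring
  have hmix' : ∀ i, 1 ≤ i → Tendsto (fun n => μ.real ((((T (-1))^[k n])^[q n])^[i] ⁻¹' B ∩ B))
      atTop (nhds (μ.real B ^ 2)) := fun i hi => by
    simpa only [← Function.iterate_mul, hiter, measureReal_def, mul_comm, mul_left_comm]
      using hmix i hi
  simpa only [birkhoffAverage, birkhoffSum, ← Function.iterate_mul, hiter, smul_eq_mul, one_div,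
    measureReal_def, mul_comm] using tendsto_integral_abs_birkhoffAverage_indicator_sub
      (fun n => (hmp (-1)).iterate (k n)) hB hq hmix'
end
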